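/- arXiv:1209.4565 — 2 statements merged into one kernel-verified Lean document; each statement's English description precedes it below -/
import Mathlib

section
/- Let n ≥ 2 and let x = (x_2,…,x_{2n−1}) be nonzero complex numbers such that T_k(x) ≠ 0 for 1 ≤ k ≤ n−1. Suppose a ∈ ℂ^× and y = (y_1,…,y_{2n−2}) ∈ (ℂ^×)^{2n−2} satisfy Y_{ij}(y) = a·X_{ij}(x) for all 1 ≤ i < j ≤ n+1. Then a = 1/x_n and y = y(x), i.e. y_1 = T_1(x)^{−1}, y_k = x_k·T_k(x)^{−1} for 2 ≤ k ≤ n−1, y_n = 1/x_n, and y_{n+l} = (x_{n+l}/x_n)·T_l(x) for 1 ≤ l ≤ n−2. -/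
/-!
Only the entries in columns `n - 1`, `n` and `n + 1` are needed. The entries `(n - 1, n)` and
`(n, n + 1)` give `a = 1 / x_n = y_n`, and column `n` gives `y_{n+l} = a x_{n+l} T_l`. Once
`y_m = x_m / T_m` is known, the ratio `y_m / y_{n+m-1}` equals `x_n (1 / T_m - 1 / T_{m-1})`, so the
sums occurring in column `n - 1` telescope; a downward induction along that column yields
`y_k = x_k / T_k` for `k ≥ 2`, and the entry `(n - 1, n + 1)` then gives `y_1 = 1 / T_1`.
-/

noncomputable section
noncomputable section

/-- `Tf n x k = ∑_{j=k+1}^{n} x_j / x_{n+j-1}` (so `Tf n x n = 0`). -/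
def Tf (n : ℕ) (x : ℕ → ℂ) (k : ℕ) : ℂ :=
  ∑ j ∈ Finset.Icc (k + 1) n, x j / x (n + j - 1)

/-- The coefficients `X_{ij}(x)` for `1 ≤ i < j ≤ n+1`. -/
def Xc (n : ℕ) (x : ℕ → ℂ) (i j : ℕ) : ℂ :=
  if j = n + 1 then (if i = n then 1 else x (n + i))
  else if j = n then x (i + 1) + x (n + i) * ∑ m ∈ Finset.Icc (i + 2) n, x m / x (n + m - 1)
  else x (n + j) * (x (i + 1) + x (n + i) * ∑ m ∈ Finset.Icc (i + 2) j, x m / x (n + m - 1))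

/-- The coefficients `Y_{ij}(y)` for `1 ≤ i < j ≤ n+1`. -/
def Yc (n : ℕ) (y : ℕ → ℂ) (i j : ℕ) : ℂ :=
  if j = n + 1 then
    (if i = n then y n
     else if i = n - 1 then y 1 + y n * ∑ m ∈ Finset.Icc 2 (n - 1), y m / y (n + m - 1)
     else y (n + i) * (y 1 + y n * ∑ m ∈ Finset.Icc 2 i, y m / y (n + m - 1)))
  else if j = n then (if i = n - 1 then 1 else y (n + i))
  else if j = n - 1 then
    y (i + 1) + y (n + i) * ∑ m ∈ Finset.Icc (i + 2) (n - 1), y m / y (n + m - 1)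
  else y (n + j) * (y (i + 1) + y (n + i) * ∑ m ∈ Finset.Icc (i + 2) j, y m / y (n + m - 1))

/-- The map `x ↦ y(x)`:
`y_1 = T_1(x)⁻¹`, `y_k = x_k·T_k(x)⁻¹` for `2 ≤ k ≤ n-1`, `y_n = x_n⁻¹`,
`y_{n+l} = (x_{n+l}/x_n)·T_l(x)` for `1 ≤ l ≤ n-2`. -/
def yOf (n : ℕ) (x : ℕ → ℂ) (k : ℕ) : ℂ :=
  if k = 1 then (Tf n x 1)⁻¹
  else if k ≤ n - 1 then x k * (Tf n x k)⁻¹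
  else if k = n then (x n)⁻¹
  else (x k / x n) * Tf n x (k - n)

open Finset

section Tf

variable {n : ℕ} (x : ℕ → ℂ)

lemma Tf_self : Tf n x n = 0 := by
  simp [Tf]

lemma Tf_sub_Tf {k l : ℕ} (hkl : k ≤ l) (hln : l ≤ n) :
    Tf n x k - Tf n x l = ∑ m ∈ Icc (k + 1) l, x m / x (n + m - 1) := by
  simp only [Tf, Icc_add_one_left_eq_Ioc]
  rw [← sum_Ioc_consecutive _ hkl hln, add_sub_cancel_right]

lemma Tf_eq_div_add {k : ℕ} (hk : k < n) :
    Tf n x k = x (k + 1) / x (n + k) + Tf n x (k + 1) := by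
  rw [← sub_eq_iff_eq_add, Tf_sub_Tf x k.le_succ hk, Icc_self, sum_singleton]
  rfl

lemma Tf_pred_self (hn : 1 ≤ n) : Tf n x (n - 1) = x n / x (2 * n - 1) := by
  rw [Tf_eq_div_add x (by omega), Nat.sub_add_cancel hn, Tf_self, add_zero,
    show n + (n - 1) = 2 * n - 1 by omega]

end Tf

section Entries

variable {n i : ℕ} (x y : ℕ → ℂ)

lemma Xc_self_succ : Xc n x n (n + 1) = 1 := by
  simp [Xc]

lemma Xc_pred_self (hn : 1 ≤ n) : Xc n x (n - 1) n = x n := by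
  simp [Xc, Nat.sub_add_cancel hn, Icc_eq_empty (show ¬ n - 1 + 2 ≤ n by omega)]

lemma Xc_pred_succ (hn : 1 ≤ n) : Xc n x (n - 1) (n + 1) = x (2 * n - 1) := by
  simp [Xc, show n - 1 ≠ n by omega, show n + (n - 1) = 2 * n - 1 by omega]

lemma Xc_lt_self (hi : i < n) (hxi : x (n + i) ≠ 0) : Xc n x i n = x (n + i) * Tf n x i := by
  simp only [Xc, if_neg (Nat.succ_ne_self n).symm, if_true]
  rw [Tf_eq_div_add x hi]
  field_simp
  rfl

lemma Xc_lt_pred (hi : i + 2 ≤ n) (hxi : x (n + i) ≠ 0) :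
    Xc n x i (n - 1) = x (2 * n - 1) * x (n + i) * (Tf n x i - Tf n x (n - 1)) := by
  simp only [Xc, if_neg (show n - 1 ≠ n + 1 by omega), if_neg (show n - 1 ≠ n by omega),
    show n + (n - 1) = 2 * n - 1 by omega]
  rw [← Tf_sub_Tf x (show i + 1 ≤ n - 1 by omega) (by omega), Tf_eq_div_add x (by omega : i < n)]
  field_simp
  ring

lemma Yc_self_succ : Yc n y n (n + 1) = y n := by
  simp [Yc]

lemma Yc_pred_self : Yc n y (n - 1) n = 1 := by
  simp [Yc]

lemma Yc_pred_succ (hn : 1 ≤ n) :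
    Yc n y (n - 1) (n + 1) = y 1 + y n * ∑ m ∈ Icc 2 (n - 1), y m / y (n + m - 1) := by
  simp [Yc, show n - 1 ≠ n by omega]

lemma Yc_lt_self (hi : i + 1 < n) : Yc n y i n = y (n + i) := by
  simp [Yc, show i ≠ n - 1 by omega]

lemma Yc_lt_pred (hn : 1 ≤ n) :
    Yc n y i (n - 1) = y (i + 1) + y (n + i) * ∑ m ∈ Icc (i + 2) (n - 1), y m / y (n + m - 1) := by
  simp [Yc, show n - 1 ≠ n + 1 by omega, show n - 1 ≠ n by omega]

end Entries

def CoeffsProportional (n : ℕ) (x y : ℕ → ℂ) (a : ℂ) : Prop :=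
  ∀ i j, 1 ≤ i → i < j → j ≤ n + 1 → Yc n y i j = a * Xc n x i j

namespace CoeffsProportional

variable {n : ℕ} {x y : ℕ → ℂ} {a : ℂ}

theorem eq_inv (h : CoeffsProportional n x y a) (hn : 2 ≤ n) : a = (x n)⁻¹ := by
  have key := h (n - 1) n (by omega) (by omega) (by omega)
  rw [Yc_pred_self, Xc_pred_self x (by omega)] at key
  exact eq_inv_of_mul_eq_one_left key.symm

theorem y_self (h : CoeffsProportional n x y a) (hn : 1 ≤ n) : y n = a := by
  simpa [Yc_self_succ, Xc_self_succ] using h n (n + 1) hn (by omega) le_rfl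

theorem y_add (h : CoeffsProportional n x y a) {l : ℕ} (hl : 1 ≤ l) (hln : l + 2 ≤ n)
    (hxl : x (n + l) ≠ 0) :
    y (n + l) = a * (x (n + l) * Tf n x l) := by
  rw [← Yc_lt_self y (by omega), ← Xc_lt_self x (by omega) hxl]
  exact h l n hl (by omega) (by omega)

theorem y_succ_of_sum_ratio (h : CoeffsProportional n x y a) (hn : 2 ≤ n)
    (hx : ∀ k, 2 ≤ k → k ≤ 2 * n - 1 → x k ≠ 0) (hT : ∀ k, 1 ≤ k → k ≤ n - 1 → Tf n x k ≠ 0)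
    {k : ℕ} (hk : 1 ≤ k) (hkn : k + 2 ≤ n)
    (hsum : ∑ m ∈ Icc (k + 2) (n - 1), y m / y (n + m - 1) =
      x n * ((Tf n x (n - 1))⁻¹ - (Tf n x (k + 1))⁻¹)) :
    y (k + 1) = x (k + 1) / Tf n x (k + 1) := by
  have hxk : x (n + k) ≠ 0 := hx _ (by omega) (by omega)
  have hxn : x n ≠ 0 := hx n hn (by omega)
  have hx2n : x (2 * n - 1) ≠ 0 := hx _ (by omega) (by omega)
  have hTk1 : Tf n x (k + 1) ≠ 0 := hT (k + 1) (by omega) (by omega)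
  have key := h k (n - 1) hk (by omega) (by omega)
  rw [Yc_lt_pred y (by omega), Xc_lt_pred x hkn hxk, hsum, h.y_add hk hkn hxk, h.eq_inv hn,
    Tf_pred_self x (by omega), Tf_eq_div_add x (show k < n by omega)] at key
  field_simp at key
  rw [eq_div_iff hTk1]
  apply mul_left_cancel₀ hxn
  linear_combination key

theorem sum_ratio (h : CoeffsProportional n x y a) (hn : 2 ≤ n)
    (hx : ∀ k, 2 ≤ k → k ≤ 2 * n - 1 → x k ≠ 0) (hT : ∀ k, 1 ≤ k → k ≤ n - 1 → Tf n x k ≠ 0)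
    {k : ℕ} (hk : 1 ≤ k) (hkn : k ≤ n - 1) :
    ∑ m ∈ Icc (k + 1) (n - 1), y m / y (n + m - 1) =
      x n * ((Tf n x (n - 1))⁻¹ - (Tf n x k)⁻¹) := by
  induction hkn using Nat.decreasingInduction with
  | self => simp
  | of_succ k hkn ih =>
    have hsum := ih (by omega)
    have hxk : x (n + k) ≠ 0 := hx _ (by omega) (by omega)
    have hxn : x n ≠ 0 := hx n hn (by omega)
    have hTk : Tf n x k ≠ 0 := hT k hk (by omega)
    have hTk1 : Tf n x (k + 1) ≠ 0 := hT (k + 1) (by omega) (by omega)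
    rw [Icc_eq_cons_Ioc (by omega), sum_cons, ← Icc_add_one_left_eq_Ioc, hsum,
      h.y_succ_of_sum_ratio hn hx hT hk (by omega) hsum, show n + (k + 1) - 1 = n + k by omega,
      h.y_add hk (by omega) hxk, h.eq_inv hn]
    have hxk1 : x (k + 1) = x (n + k) * (Tf n x k - Tf n x (k + 1)) := by
      rw [Tf_eq_div_add x (show k < n by omega), add_sub_cancel_right, mul_div_cancel₀ _ hxk]
    rw [hxk1]
    field_simp
    ring

theorem y_one (h : CoeffsProportional n x y a) (hn : 2 ≤ n)
    (hx : ∀ k, 2 ≤ k → k ≤ 2 * n - 1 → x k ≠ 0) (hT : ∀ k, 1 ≤ k → k ≤ n - 1 → Tf n x k ≠ 0) :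
    y 1 = (Tf n x 1)⁻¹ := by
  have hxn : x n ≠ 0 := hx n hn (by omega)
  have hT1 : Tf n x 1 ≠ 0 := hT 1 le_rfl (by omega)
  have key := h (n - 1) (n + 1) (by omega) (by omega) le_rfl
  rw [Yc_pred_succ y (by omega), Xc_pred_succ x (by omega), h.y_self (by omega), h.eq_inv hn,
    h.sum_ratio hn hx hT le_rfl (by omega), Tf_pred_self x (by omega)] at key
  field_simp at key
  refine eq_inv_of_mul_eq_one_left (mul_left_cancel₀ hxn ?_)
  linear_combination key

end CoeffsProportional

section yOf

variable {n k : ℕ} (x : ℕ → ℂ)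

lemma yOf_one : yOf n x 1 = (Tf n x 1)⁻¹ := by
  simp [yOf]

lemma yOf_of_two_le (hk : 2 ≤ k) (hkn : k ≤ n - 1) : yOf n x k = x k / Tf n x k := by
  simp [yOf, show k ≠ 1 by omega, hkn, div_eq_mul_inv]

lemma yOf_self (hn : 2 ≤ n) : yOf n x n = (x n)⁻¹ := by
  simp [yOf, show n ≠ 1 by omega, show ¬ n ≤ n - 1 by omega]

lemma yOf_add (hn : 1 ≤ n) (hk : 1 ≤ k) : yOf n x (n + k) = x (n + k) / x n * Tf n x k := by
  simp [yOf, show n + k ≠ 1 by omega, show ¬ n + k ≤ n - 1 by omega, show k ≠ 0 by omega]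

end yOf

theorem stmt1_general (n : ℕ) (hn : 2 ≤ n) (x : ℕ → ℂ)
    (hx : ∀ k, 2 ≤ k → k ≤ 2 * n - 1 → x k ≠ 0)
    (hT : ∀ k, 1 ≤ k → k ≤ n - 1 → Tf n x k ≠ 0)
    (a : ℂ) (y : ℕ → ℂ)
    (heq : ∀ i j, 1 ≤ i → i < j → j ≤ n + 1 → Yc n y i j = a * Xc n x i j) :
    a = 1 / x n ∧ ∀ k, 1 ≤ k → k ≤ 2 * n - 2 → y k = yOf n x k := by
  have h : CoeffsProportional n x y a := heq
  have ha := h.eq_inv hn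
  refine ⟨ha.trans (one_div _).symm, fun k hk hkn => ?_⟩
  obtain rfl | hk := hk.eq_or_lt
  · rw [yOf_one, h.y_one hn hx hT]
  obtain hkn' | hkn' := le_or_gt k (n - 1)
  · obtain ⟨j, rfl⟩ : ∃ j, k = j + 1 := ⟨k - 1, by omega⟩
    rw [yOf_of_two_le x hk hkn', h.y_succ_of_sum_ratio hn hx hT (by omega) (by omega)
      (h.sum_ratio hn hx hT (by omega) (by omega))]
  obtain rfl | hkn' := (show n ≤ k by omega).eq_or_lt
  · rw [yOf_self x hn, h.y_self (by omega), ha]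
  obtain ⟨l, rfl⟩ : ∃ l, k = n + l := ⟨k - n, by omega⟩
  have hxl : x (n + l) ≠ 0 := hx _ (by omega) (by omega)
  rw [yOf_add x (by omega) (by omega), h.y_add (by omega) (by omega) hxl, ha]
  ring

/-- if `Y_{ij}(y) = a·X_{ij}(x)` for all `1 ≤ i < j ≤ n+1`, then
`a = 1/x_n` and `y = y(x)`. -/
theorem stmt1 (n : ℕ) (hn : 2 ≤ n) (x : ℕ → ℂ)
    (hx : ∀ k, 2 ≤ k → k ≤ 2 * n - 1 → x k ≠ 0)
    (hT : ∀ k, 1 ≤ k → k ≤ n - 1 → Tf n x k ≠ 0)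
    (a : ℂ) (ha : a ≠ 0) (y : ℕ → ℂ)
    (hy : ∀ k, 1 ≤ k → k ≤ 2 * n - 2 → y k ≠ 0)
    (heq : ∀ i j, 1 ≤ i → i < j → j ≤ n + 1 → Yc n y i j = a * Xc n x i j) :
    a = 1 / x n ∧ ∀ k, 1 ≤ k → k ≤ 2 * n - 2 → y k = yOf n x k :=
  stmt1_general n hn x hx hT a y heq
end
end
end

section
/- Let n ≥ 2 and x = (x_2,…,x_{2n−1}) ∈ ℤ^{2n−2}. Then Ω(f̃_0(x)) = f̃_0(Ω(x)), where on ℤ^{2n−2} the operator f̃_0 is defined as follows: with β_k(x) = x_k − x_{n+k−1} for 2 ≤ k ≤ n and β_1 = β_{n+1} = 0, if j ∈ {2,…,n} is the (unique) index satisfying condition (φ_j): β_2,…,β_{j−1} ≤ β_j and β_j > β_{j+1},…,β_n, then f̃_0(x) adds 1 to each of the coordinates x_j, x_{j+1},…,x_{n+j−1} and leaves the others unchanged. -/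
attribute [local instance] Classical.propDecidable

/-- The map `Ω`. -/
def Omega (n : ℕ) (x : ℕ → ℤ) : (ℕ → ℤ) × (ℕ → ℤ) :=
  (fun i => if i = 1 then x (n + 1)
    else if 2 ≤ i ∧ i ≤ n - 1 then x (n + i) - x (n + i - 1)
    else if i = n then -x (2 * n - 1) else 0,
   fun i => if i = 2 then x 2
    else if 3 ≤ i ∧ i ≤ n then x i - x (i - 1)
    else if i = n + 1 then -x n else 0)

/-- `z_i = b_{1i} - b_{2,i+1}`. -/
def zb (b1 b2 : ℕ → ℤ) (i : ℕ) : ℤ := b1 i - b2 (i + 1)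

/-- Condition `(F_m)`. -/
def Fcond (n : ℕ) (b1 b2 : ℕ → ℤ) (m : ℕ) : Prop :=
  (∀ k, 2 ≤ k → k ≤ m - 1 → (∑ i ∈ Finset.Icc k (m - 1), zb b1 b2 i) ≤ 0) ∧
  (∀ k, m ≤ k → k ≤ n - 1 → 0 < ∑ i ∈ Finset.Icc m k, zb b1 b2 i)

/-- `β_k(x) = x_k - x_{n+k-1}` for `2 ≤ k ≤ n`, with `β_1 = β_{n+1} = 0`. -/
def betaX (n : ℕ) (x : ℕ → ℤ) (k : ℕ) : ℤ :=
  if 2 ≤ k ∧ k ≤ n then x k - x (n + k - 1) else 0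

/-- Condition `(φ_j)`: `β_2,…,β_{j-1} ≤ β_j` and `β_j > β_{j+1},…,β_n`. -/
def phiX (n : ℕ) (x : ℕ → ℤ) (j : ℕ) : Prop :=
  (∀ k, 2 ≤ k → k ≤ j - 1 → betaX n x k ≤ betaX n x j) ∧
  (∀ k, j + 1 ≤ k → k ≤ n → betaX n x k < betaX n x j)

/-- The operator `f̃_0` on `ℤ^{2n-2}`: if `j` is the (unique) index in `{2,…,n}`
satisfying `(φ_j)`, add `1` to each of the coordinates `x_j, x_{j+1}, …, x_{n+j-1}`. -/
noncomputable def ft0X (n : ℕ) (x : ℕ → ℤ) : ℕ → ℤ :=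
  fun k => if ∃ j, 2 ≤ j ∧ j ≤ n ∧ phiX n x j ∧ j ≤ k ∧ k ≤ n + j - 1 then x k + 1 else x k

/-- The operator `f̃_0` on `B^{2,∞}`: if `m` is the (unique) index in `{2,…,n}` for
which `(F_m)` holds, replace `b_{11}` by `b_{11} + 1`, `b_{1m}` by `b_{1m} - 1`,
`b_{2m}` by `b_{2m} + 1`, and `b_{2,n+1}` by `b_{2,n+1} - 1`. -/
noncomputable def ft0B (n : ℕ) (p : (ℕ → ℤ) × (ℕ → ℤ)) : (ℕ → ℤ) × (ℕ → ℤ) :=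
  (fun j => if j = 1 then p.1 1 + 1
    else if 2 ≤ j ∧ j ≤ n ∧ Fcond n p.1 p.2 j then p.1 j - 1 else p.1 j,
   fun j => if j = n + 1 then p.2 j - 1
    else if 2 ≤ j ∧ j ≤ n ∧ Fcond n p.1 p.2 j then p.2 j + 1 else p.2 j)

lemma tele (g : ℕ → ℤ) (a b : ℕ) (hab : a ≤ b) :
    ∑ i ∈ Finset.Icc a b, (g i - g (i+1)) = g a - g (b+1) := by
  induction b with
  | zero =>
    have : a = 0 := Nat.le_zero.mp hab
    subst this; simp
  | succ b ih =>
    rcases Nat.lt_or_ge a (b+1) with h | h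
    · rw [Finset.sum_Icc_succ_top hab, ih (by omega)]; ring
    · have ha : a = b + 1 := le_antisymm hab h
      subst ha; simp

lemma zb_omega (n : ℕ) (hn : 2 ≤ n) (x : ℕ → ℤ) (i : ℕ) (h2 : 2 ≤ i) (h : i ≤ n - 1) :
    zb (Omega n x).1 (Omega n x).2 i = betaX n x i - betaX n x (i+1) := by
  simp only [Omega, zb, betaX]
  rw [if_neg (by omega : ¬ i = 1), if_pos (⟨h2, h⟩ : 2 ≤ i ∧ i ≤ n - 1),
    if_neg (by omega : ¬ i + 1 = 2), if_pos (⟨by omega, by omega⟩ : 3 ≤ i+1 ∧ i+1 ≤ n),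
    if_pos (⟨h2, by omega⟩ : 2 ≤ i ∧ i ≤ n), if_pos (⟨by omega, by omega⟩ : 2 ≤ i+1 ∧ i+1 ≤ n)]
  have e1 : i + 1 - 1 = i := by omega
  have e2 : n + (i+1) - 1 = n + i := by omega
  rw [e1, e2]; ring

lemma Fcond_iff (n : ℕ) (hn : 2 ≤ n) (x : ℕ → ℤ) (m : ℕ) (hm2 : 2 ≤ m) (hmn : m ≤ n) :
    Fcond n (Omega n x).1 (Omega n x).2 m ↔ phiX n x m := by
  have key : ∀ a b : ℕ, 2 ≤ a → b ≤ n - 1 → a ≤ b →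
      ∑ i ∈ Finset.Icc a b, zb (Omega n x).1 (Omega n x).2 i
        = betaX n x a - betaX n x (b+1) := by
    intro a b ha hb hab
    rw [Finset.sum_congr rfl (fun i hi => zb_omega n hn x i
      (by simp only [Finset.mem_Icc] at hi; omega)
      (by simp only [Finset.mem_Icc] at hi; omega)), tele _ _ _ hab]
  constructor
  · rintro ⟨h1, h2⟩
    constructor
    · intro k hk2 hk
      have := h1 k hk2 hk
      rw [key k (m-1) hk2 (by omega) hk] at this
      have e : m - 1 + 1 = m := by omega
      rw [e] at this; linarith
    · intro k hk1 hkn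
      have := h2 (k-1) (by omega) (by omega)
      rw [key m (k-1) hm2 (by omega) (by omega)] at this
      have e : k - 1 + 1 = k := by omega
      rw [e] at this; linarith
  · rintro ⟨h1, h2⟩
    constructor
    · intro k hk2 hk
      rw [key k (m-1) hk2 (by omega) hk]
      have e : m - 1 + 1 = m := by omega
      rw [e]
      have := h1 k hk2 hk; linarith
    · intro k hk1 hkn
      rw [key m k hm2 hkn hk1]
      have := h2 (k+1) (by omega) (by omega); linarith

lemma exists_phi (n : ℕ) (hn : 2 ≤ n) (x : ℕ → ℤ) :
    ∃ j, 2 ≤ j ∧ j ≤ n ∧ phiX n x j := by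
  have hne : (Finset.Icc 2 n).Nonempty := ⟨2, by simp [hn]⟩
  set M := (Finset.Icc 2 n).sup' hne (betaX n x) with hM
  have hT : ((Finset.Icc 2 n).filter (fun k => betaX n x k = M)).Nonempty := by
    obtain ⟨k, hk, hkM⟩ := Finset.exists_mem_eq_sup' hne (betaX n x)
    exact ⟨k, Finset.mem_filter.2 ⟨hk, hkM.symm⟩⟩
  set j := Finset.max' _ hT with hj
  have hjmem := Finset.max'_mem _ hT
  rw [Finset.mem_filter, Finset.mem_Icc] at hjmem
  obtain ⟨⟨hj2, hjn⟩, hjM⟩ := hjmem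
  refine ⟨j, hj2, hjn, ?_, ?_⟩
  · intro k hk2 hk
    have hkmem : k ∈ Finset.Icc 2 n := Finset.mem_Icc.2 ⟨hk2, by omega⟩
    have := Finset.le_sup' (betaX n x) hkmem
    rw [hjM]; exact this
  · intro k hk1 hkn
    have hkmem : k ∈ Finset.Icc 2 n := Finset.mem_Icc.2 ⟨by omega, hkn⟩
    have hle : betaX n x k ≤ M := Finset.le_sup' (betaX n x) hkmem
    rw [hjM]
    rcases lt_or_eq_of_le hle with h | h
    · exact h
    · exfalso
      have : k ∈ (Finset.Icc 2 n).filter (fun k => betaX n x k = M) :=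
        Finset.mem_filter.2 ⟨hkmem, h⟩
      have := Finset.le_max' _ k this
      omega

lemma phi_unique (n : ℕ) (x : ℕ → ℤ) (m j : ℕ) (hm2 : 2 ≤ m) (hmn : m ≤ n)
    (hm : phiX n x m) (hj2 : 2 ≤ j) (hjn : j ≤ n) (hj : phiX n x j) : m = j := by
  by_contra hne
  rcases Nat.lt_or_ge m j with h | h
  · have h1 := hm.2 j (by omega) hjn
    have h2 := hj.1 m hm2 (by omega)
    linarith
  · have h1 := hj.2 m (by omega) hmn
    have h2 := hm.1 j hj2 (by omega)
    linarith

/-- `Ω(f̃_0(x)) = f̃_0(Ω(x))`. -/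
theorem stmt19 (n : ℕ) (hn : 2 ≤ n) (x : ℕ → ℤ) :
    Omega n (ft0X n x) = ft0B n (Omega n x) := by
  obtain ⟨j, hj2, hjn, hphi⟩ := exists_phi n hn x
  have huni : ∀ m, 2 ≤ m → m ≤ n → phiX n x m → m = j := fun m h1 h2 h3 =>
    phi_unique n x m j h1 h2 h3 hj2 hjn hphi
  have hFj : Fcond n (Omega n x).1 (Omega n x).2 j := (Fcond_iff n hn x j hj2 hjn).2 hphi
  have hcond : ∀ i, (2 ≤ i ∧ i ≤ n ∧ Fcond n (Omega n x).1 (Omega n x).2 i)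
      ↔ (2 ≤ i ∧ i ≤ n ∧ i = j) := by
    intro i; constructor
    · rintro ⟨h1, h2, h3⟩
      exact ⟨h1, h2, huni i h1 h2 ((Fcond_iff n hn x i h1 h2).1 h3)⟩
    · rintro ⟨h1, h2, rfl⟩; exact ⟨h1, h2, hFj⟩
  have hex : ∀ k, (∃ j', 2 ≤ j' ∧ j' ≤ n ∧ phiX n x j' ∧ j' ≤ k ∧ k ≤ n + j' - 1)
      ↔ (j ≤ k ∧ k ≤ n + j - 1) := by
    intro k
    constructor
    · rintro ⟨j', h1, h2, h3, h4, h5⟩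
      have := huni j' h1 h2 h3; omega
    · rintro ⟨h1, h2⟩; exact ⟨j, hj2, hjn, hphi, h1, h2⟩
  have hft : ∀ k, ft0X n x k = if j ≤ k ∧ k ≤ n + j - 1 then x k + 1 else x k := by
    intro k; rw [ft0X]; by_cases h : j ≤ k ∧ k ≤ n + j - 1
    · rw [if_pos ((hex k).2 h), if_pos h]
    · rw [if_neg (fun hh => h ((hex k).1 hh)), if_neg h]
  refine Prod.ext ?_ ?_ <;> funext i
  · show (Omega n (ft0X n x)).1 i = (ft0B n (Omega n x)).1 i
    simp only [ft0B, hcond]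
    simp only [Omega, hft]
    split_ifs <;> first | ring1 | omega
  · show (Omega n (ft0X n x)).2 i = (ft0B n (Omega n x)).2 i
    simp only [ft0B, hcond]
    simp only [Omega, hft]
    split_ifs <;> first | ring1 | omega
end
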